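/- Fix positive integers n and r, and let I := { α : Fin n → ℕ | Σᵢ αᵢ ≤ r }. With e_α, E_{α,β}, B_γ, and B⊥_{γ,α} defined as follows — E_{α,β} := e_α e_βᵀ + e_β e_αᵀ; for γ : Fin n → ℕ with Σᵢ γᵢ ≤ 2r, B_γ := (1/C_γ) Σ_{(α,β) ∈ I×I, α+β=γ} e_α e_βᵀ where C_γ is the number of such pairs; ᾱ(γ) is the lexicographically smallest α ∈ I with γ − α ∈ I, β̄(γ) := γ − ᾱ(γ); and B⊥_{γ,α} := E_{ᾱ(γ), β̄(γ)} − E_{α, γ−α} for α ∈ I with γ − α ∈ I and α ≠ ᾱ(γ) — every real symmetric matrix indexed by I × I is a real linear combination of matrices from the family {B_γ} ∪ {B⊥_{γ,α}}. -/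
import Mathlib


open Matrix

/-- Multi-indices `α : Fin n → ℕ` of total degree at most `r` (encoded with values in
`Fin (r+1)`, which is no restriction since `∑ i, α i ≤ r` forces each `α i ≤ r`). -/
abbrev MIdx (n r : ℕ) : Type := {α : Fin n → Fin (r + 1) // ∑ i, (α i : ℕ) ≤ r}

/-- Standard basis vector `e_α` of `ℝ^I`. -/
def eVec {n r : ℕ} (α : MIdx n r) : MIdx n r → ℝ := fun β => if β = α then 1 else 0

/-- `E_{α,β} := e_α e_βᵀ + e_β e_αᵀ`. -/
def Emat {n r : ℕ} (α β : MIdx n r) : Matrix (MIdx n r) (MIdx n r) ℝ :=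
  vecMulVec (eVec α) (eVec β) + vecMulVec (eVec β) (eVec α)

/-- The sum `α + β` of two multi-indices, as a function `Fin n → ℕ`. -/
def addIdx {n r : ℕ} (α β : MIdx n r) : Fin n → ℕ := fun i => (α.1 i : ℕ) + (β.1 i : ℕ)

/-- `D(γ) := {(α, β) ∈ I × I | α + β = γ}`. -/
def Dset (n r : ℕ) (γ : Fin n → ℕ) : Finset (MIdx n r × MIdx n r) :=
  Finset.univ.filter (fun p => addIdx p.1 p.2 = γ)

/-- `B_γ := (1/C_γ) ∑_{(α,β) ∈ D(γ)} e_α e_βᵀ` where `C_γ = |D(γ)|`. -/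
noncomputable def Bmat (n r : ℕ) (γ : Fin n → ℕ) : Matrix (MIdx n r) (MIdx n r) ℝ :=
  (((Dset n r γ).card : ℝ))⁻¹ • ∑ p ∈ Dset n r γ, vecMulVec (eVec p.1) (eVec p.2)

/-- `B⊥_{γ,α} := E_{ᾱ(γ), β̄(γ)} − E_{α, γ−α}`, given `ᾱ(γ) + β̄(γ) = γ = α + β`. -/
def Bperp {n r : ℕ} (αb βb α β : MIdx n r) : Matrix (MIdx n r) (MIdx n r) ℝ :=
  Emat αb βb - Emat α β

/-- Strict lexicographic order on multi-indices. -/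
def lexLt {n r : ℕ} (f g : Fin n → Fin (r + 1)) : Prop :=
  ∃ i, (∀ j, j < i → f j = g j) ∧ f i < g i

/-- Lexicographic order on multi-indices. -/
def lexLe {n r : ℕ} (f g : Fin n → Fin (r + 1)) : Prop := f = g ∨ lexLt f g

lemma addIdx_comm {n r : ℕ} (α β : MIdx n r) : addIdx α β = addIdx β α := by
  funext i; simp [addIdx, Nat.add_comm]

lemma addIdx_left_cancel {n r : ℕ} {α β β' : MIdx n r}
    (h : addIdx α β = addIdx α β') : β = β' := by
  apply Subtype.ext; funext i
  have := congrFun h i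
  simp only [addIdx, Nat.add_right_cancel_iff] at this
  exact Fin.ext (Nat.add_left_cancel this)

lemma sum_addIdx_le {n r : ℕ} (α β : MIdx n r) : ∑ i, addIdx α β i ≤ 2 * r := by
  have h : ∑ i, addIdx α β i = (∑ i, (α.1 i : ℕ)) + ∑ i, (β.1 i : ℕ) := by
    simp [addIdx, Finset.sum_add_distrib]
  have hα := α.2; have hβ := β.2
  omega

lemma matrix_eq_sum {n r : ℕ} (M : Matrix (MIdx n r) (MIdx n r) ℝ) :
    M = ∑ p : MIdx n r × MIdx n r, M p.1 p.2 • vecMulVec (eVec p.1) (eVec p.2) := by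
  ext a b
  rw [Matrix.sum_apply]
  rw [Finset.sum_eq_single (a, b)]
  · simp [vecMulVec_apply, eVec]
  · intro p _ hp
    simp only [Matrix.smul_apply, vecMulVec_apply, eVec, smul_eq_mul]
    rcases eq_or_ne a p.1 with h1 | h1
    · rcases eq_or_ne b p.2 with h2 | h2
      · exact absurd (Prod.ext h1.symm h2.symm) hp
      · simp [if_neg h2]
    · simp [if_neg h1]
  · simp


/-- spanning part of Lemma 6: with `ᾱ(γ)` the lexicographically
smallest `α ∈ I` such that `γ − α ∈ I` and `β̄(γ) := γ − ᾱ(γ)`, every real symmetric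
matrix indexed by `I × I` is a real linear combination of matrices from the
families `{B_γ}` and `{B⊥_{γ,α}}` (the latter indexed by the pairs `(α, γ − α)`
with `α ≠ ᾱ(γ)`). -/
theorem B_spanning (n r : ℕ) (hn : 0 < n) (hr : 0 < r)
    (αb βb : (Fin n → ℕ) → MIdx n r)
    (hdecomp : ∀ γ : Fin n → ℕ, (∑ i, γ i) ≤ 2 * r →
      (∃ α β : MIdx n r, addIdx α β = γ) → addIdx (αb γ) (βb γ) = γ)
    (hmin : ∀ γ : Fin n → ℕ, (∑ i, γ i) ≤ 2 * r →
      ∀ α β : MIdx n r, addIdx α β = γ → lexLe (αb γ).1 α.1) :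
    ∀ M : Matrix (MIdx n r) (MIdx n r) ℝ, M.IsSymm →
      ∃ (c : (Fin n → ℕ) → ℝ) (d : MIdx n r × MIdx n r → ℝ),
        M = (∑ γ ∈ Finset.image (fun p : MIdx n r × MIdx n r => addIdx p.1 p.2)
              Finset.univ, c γ • Bmat n r γ)
          + ∑ p : MIdx n r × MIdx n r,
              (if p.1 ≠ αb (addIdx p.1 p.2) then
                d p • Bperp (αb (addIdx p.1 p.2)) (βb (addIdx p.1 p.2)) p.1 p.2
              else 0) := by
  classical
  intro M hM
  set c : (Fin n → ℕ) → ℝ := fun γ => ∑ p ∈ Dset n r γ, M p.1 p.2 with hc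
  set d : MIdx n r × MIdx n r → ℝ := fun p =>
    (c (addIdx p.1 p.2) / ((Dset n r (addIdx p.1 p.2)).card : ℝ) - M p.1 p.2) / 2 with hd
  refine ⟨c, d, ?_⟩
  -- step 1: rewrite the B-sum as a sum over all pairs
  have h1 : (∑ γ ∈ Finset.image (fun p : MIdx n r × MIdx n r => addIdx p.1 p.2)
        Finset.univ, c γ • Bmat n r γ)
      = ∑ p : MIdx n r × MIdx n r,
          (c (addIdx p.1 p.2) / ((Dset n r (addIdx p.1 p.2)).card : ℝ)) •
            vecMulVec (eVec p.1) (eVec p.2) := by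
    rw [← Finset.sum_fiberwise_of_maps_to
      (fun p (_ : p ∈ Finset.univ) => Finset.mem_image_of_mem
        (fun p : MIdx n r × MIdx n r => addIdx p.1 p.2) (Finset.mem_univ p))
      (fun p => (c (addIdx p.1 p.2) / ((Dset n r (addIdx p.1 p.2)).card : ℝ)) •
            vecMulVec (eVec p.1) (eVec p.2))]
    refine Finset.sum_congr rfl fun γ hγ => ?_
    rw [Bmat, smul_comm, Finset.smul_sum, Finset.smul_sum]
    refine Finset.sum_congr rfl fun p hp => ?_
    have hpγ : addIdx p.1 p.2 = γ := (Finset.mem_filter.mp hp).2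
    rw [hpγ, smul_smul, div_eq_mul_inv, mul_comm]
  -- step 2: remove the `if` in the Bperp sum
  have h2 : (∑ p : MIdx n r × MIdx n r,
        (if p.1 ≠ αb (addIdx p.1 p.2) then
          d p • Bperp (αb (addIdx p.1 p.2)) (βb (addIdx p.1 p.2)) p.1 p.2
        else 0))
      = ∑ p : MIdx n r × MIdx n r,
          d p • Bperp (αb (addIdx p.1 p.2)) (βb (addIdx p.1 p.2)) p.1 p.2 := by
    refine Finset.sum_congr rfl fun p _ => ?_
    by_cases h : p.1 ≠ αb (addIdx p.1 p.2)
    · rw [if_pos h]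
    · rw [if_neg h]
      push_neg at h
      have hde := hdecomp (addIdx p.1 p.2) (sum_addIdx_le p.1 p.2) ⟨p.1, p.2, rfl⟩
      rw [← h] at hde
      have : p.2 = βb (addIdx p.1 p.2) := addIdx_left_cancel hde.symm
      rw [← h, ← this, Bperp, sub_self, smul_zero]
  rw [h1, h2]
  -- step 3: split Bperp and kill the Emat (αb, βb) part
  have h3 : (∑ p : MIdx n r × MIdx n r,
        d p • Emat (αb (addIdx p.1 p.2)) (βb (addIdx p.1 p.2))) = 0 := by
    rw [← Finset.sum_fiberwise_of_maps_to
      (fun p (_ : p ∈ Finset.univ) => Finset.mem_image_of_mem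
        (fun p : MIdx n r × MIdx n r => addIdx p.1 p.2) (Finset.mem_univ p))
      (fun p => d p • Emat (αb (addIdx p.1 p.2)) (βb (addIdx p.1 p.2)))]
    refine Finset.sum_eq_zero fun γ hγ => ?_
    rw [show Finset.filter (fun i => (fun p : MIdx n r × MIdx n r => addIdx p.1 p.2) i = γ)
      Finset.univ = Dset n r γ from rfl]
    have hγne : (Dset n r γ).Nonempty := by
      obtain ⟨p, -, hp⟩ := Finset.mem_image.mp hγ
      exact ⟨p, Finset.mem_filter.mpr ⟨Finset.mem_univ p, hp⟩⟩
    have hC : ((Dset n r γ).card : ℝ) ≠ 0 :=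
      Nat.cast_ne_zero.mpr (Finset.card_pos.mpr hγne).ne'
    have : ∀ p ∈ Dset n r γ, d p • Emat (αb (addIdx p.1 p.2)) (βb (addIdx p.1 p.2))
        = d p • Emat (αb γ) (βb γ) := by
      intro p hp
      rw [(Finset.mem_filter.mp hp).2]
    rw [Finset.sum_congr rfl this, ← Finset.sum_smul]
    convert zero_smul ℝ (Emat (αb γ) (βb γ))
    have hdp : ∀ p ∈ Dset n r γ, d p = (c γ / ((Dset n r γ).card : ℝ) - M p.1 p.2) / 2 := by
      intro p hp
      simp only [hd]
      rw [(Finset.mem_filter.mp hp).2]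
    rw [Finset.sum_congr rfl hdp, ← Finset.sum_div, Finset.sum_sub_distrib, Finset.sum_const,
      nsmul_eq_mul, mul_comm, div_mul_cancel₀ _ hC, sub_self, zero_div]
  -- step 4: swap symmetry
  have h4 : (∑ p : MIdx n r × MIdx n r, d p • vecMulVec (eVec p.2) (eVec p.1))
      = ∑ p : MIdx n r × MIdx n r, d p • vecMulVec (eVec p.1) (eVec p.2) := by
    rw [Fintype.sum_equiv (Equiv.prodComm (MIdx n r) (MIdx n r))
      (fun p => d p • vecMulVec (eVec p.2) (eVec p.1))
      (fun q => d (q.2, q.1) • vecMulVec (eVec q.1) (eVec q.2)) (fun p => rfl)]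
    refine Finset.sum_congr rfl fun q _ => ?_
    have hMq : M q.2 q.1 = M q.1 q.2 := hM.apply q.1 q.2
    have : d (q.2, q.1) = d q := by
      simp only [hd]
      rw [addIdx_comm q.2 q.1, hMq]
    rw [this]
  -- final assembly
  simp only [Bperp, smul_sub]
  rw [Finset.sum_sub_distrib, h3, zero_sub, ← sub_eq_add_neg]
  simp only [Emat, smul_add]
  rw [Finset.sum_add_distrib, h4, matrix_eq_sum M, ← Finset.sum_add_distrib,
    ← Finset.sum_sub_distrib]
  refine Finset.sum_congr rfl fun p _ => ?_
  rw [← add_smul, ← sub_smul]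
  congr 1
  simp only [hd]
  ring
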